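/- arXiv:2201.10161 — 10 statements merged into one kernel-verified Lean document; each statement's English description precedes it below -/
import Mathlib

section
/- Let V be a finite-dimensional real inner product space, and let G, G' ⊂ V be two bases of V with |G ∩ G'| = |G| − 1 = |G'| − 1. Let H be the hyperplane spanned by G ∩ G' with unit normal vector t, and let f be the unique element of G \ G' and f' the unique element of G' \ G. Then the relative interiors of cone(G) and cone(G') are disjoint if and only if (f·t)(f'·t) < 0. -/
open RealInnerProductSpace

/-- Two maximal elementary simplicial cones generated by bases `G`, `G'` differing in one
element are adjacent (relative interiors disjoint) iff the scalar products of the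
exchanged vectors with the unit normal `t` of the common hyperplane have opposite signs. -/
theorem stmt1 {V : Type*} [NormedAddCommGroup V] [InnerProductSpace ℝ V]
    [FiniteDimensional ℝ V] [DecidableEq V]
    (G G' : Finset V)
    (hGli : LinearIndependent ℝ ((↑) : ↥(G : Set V) → V))
    (hG'li : LinearIndependent ℝ ((↑) : ↥(G' : Set V) → V))
    (hGsp : Submodule.span ℝ (G : Set V) = ⊤)
    (hG'sp : Submodule.span ℝ (G' : Set V) = ⊤)
    (hcard : (G ∩ G').card = G.card - 1) (hcard' : (G ∩ G').card = G'.card - 1)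
    (t : V) (ht : ‖t‖ = 1) (htperp : ∀ g ∈ G ∩ G', ⟪g, t⟫ = 0)
    (f f' : V) (hf : G \ G' = {f}) (hf' : G' \ G = {f'}) :
    Disjoint
      {v : V | ∃ α : V → ℝ, (∀ g ∈ G, 0 < α g) ∧ v = ∑ g ∈ G, α g • g}
      {v : V | ∃ α : V → ℝ, (∀ g ∈ G', 0 < α g) ∧ v = ∑ g ∈ G', α g • g}
    ↔ ⟪f, t⟫ * ⟪f', t⟫ < 0 := by
  classical
  have hfmem : f ∈ G \ G' := hf ▸ Finset.mem_singleton_self f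
  have hf'mem : f' ∈ G' \ G := hf' ▸ Finset.mem_singleton_self f'
  obtain ⟨hfG, hfnG'⟩ := Finset.mem_sdiff.mp hfmem
  obtain ⟨hf'G', hf'nG⟩ := Finset.mem_sdiff.mp hf'mem
  have hfni : f ∉ G ∩ G' := fun h => hfnG' (Finset.mem_inter.mp h).2
  have hf'ni : f' ∉ G ∩ G' := fun h => hf'nG (Finset.mem_inter.mp h).1
  have hGeq : G = insert f (G ∩ G') := by
    rw [Finset.insert_eq, ← hf, Finset.sdiff_union_inter]
  have hG'eq : G' = insert f' (G ∩ G') := by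
    rw [Finset.insert_eq, ← hf', Finset.inter_comm, Finset.sdiff_union_inter]
  have key : ∀ (x : V), x ∉ G ∩ G' → ∀ γ : V → ℝ,
      ⟪∑ g ∈ insert x (G ∩ G'), γ g • g, t⟫ = γ x * ⟪x, t⟫ := by
    intro x hx γ
    rw [Finset.sum_insert hx, inner_add_left, real_inner_smul_left, sum_inner]
    have hz : ∑ g ∈ G ∩ G', ⟪γ g • g, t⟫ = 0 :=
      Finset.sum_eq_zero fun g hg => by
        rw [real_inner_smul_left, htperp g hg, mul_zero]
    rw [hz, add_zero]
  have htt : ⟪t, t⟫ = (1 : ℝ) := by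
    rw [real_inner_self_eq_norm_sq, ht]; norm_num
  have hft : ⟪f, t⟫ ≠ 0 := by
    have hmem : t ∈ Submodule.span ℝ (G : Set V) := hGsp ▸ Submodule.mem_top
    obtain ⟨τ, -, hτ⟩ := Submodule.mem_span_finset.mp hmem
    have h1 := key f hfni τ
    rw [← hGeq, hτ, htt] at h1
    intro h0
    rw [h0, mul_zero] at h1; norm_num at h1
  have hf't : ⟪f', t⟫ ≠ 0 := by
    have hmem : t ∈ Submodule.span ℝ (G' : Set V) := hG'sp ▸ Submodule.mem_top
    obtain ⟨τ, -, hτ⟩ := Submodule.mem_span_finset.mp hmem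
    have h1 := key f' hf'ni τ
    rw [← hG'eq, hτ, htt] at h1
    intro h0
    rw [h0, mul_zero] at h1; norm_num at h1
  constructor
  · -- disjoint → negative product
    intro hdisj
    by_contra hge
    push_neg at hge
    have hpos : 0 < ⟪f, t⟫ * ⟪f', t⟫ :=
      lt_of_le_of_ne hge (Ne.symm (mul_ne_zero hft hf't))
    have hmem : f' ∈ Submodule.span ℝ (G : Set V) := hGsp ▸ Submodule.mem_top
    obtain ⟨γ, -, hγ⟩ := Submodule.mem_span_finset.mp hmem
    have hγf : γ f * ⟪f, t⟫ = ⟪f', t⟫ := by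
      have h1 := key f hfni γ
      rw [← hGeq, hγ] at h1
      exact h1.symm
    have hx2 : 0 < ⟪f, t⟫ * ⟪f, t⟫ := mul_self_pos.mpr hft
    have h3 : γ f * (⟪f, t⟫ * ⟪f, t⟫) = ⟪f, t⟫ * ⟪f', t⟫ := by
      linear_combination ⟪f, t⟫ * hγf
    have hγfpos : 0 < γ f := by
      by_contra hneg
      push_neg at hneg
      nlinarith
    have hsplit : f' = γ f • f + ∑ g ∈ G ∩ G', γ g • g := by
      rw [← hγ]
      conv_lhs => rw [hGeq]
      rw [Finset.sum_insert hfni]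
    set S : ℝ := ∑ g ∈ G ∩ G', |γ g| with hS
    have hSnn : 0 ≤ S := Finset.sum_nonneg fun g _ => abs_nonneg _
    set ε : ℝ := (1 + S)⁻¹ with hε
    have hεpos : 0 < ε := by positivity
    have hεS : ε * S < 1 := by
      have h1S : ε * (1 + S) = 1 := inv_mul_cancel₀ (by positivity)
      nlinarith
    have hbound : ∀ g ∈ G ∩ G', 0 < 1 + ε * γ g := by
      intro g hg
      have h1 : |γ g| ≤ S := Finset.single_le_sum (fun i _ => abs_nonneg (γ i)) hg
      have h2 : ε * |γ g| ≤ ε * S := mul_le_mul_of_nonneg_left h1 hεpos.le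
      have h4 : ε * -(γ g) ≤ ε * |γ g| := mul_le_mul_of_nonneg_left (neg_le_abs (γ g)) hεpos.le
      rw [mul_neg] at h4
      linarith
    have hmem1 : (ε • f' + ∑ g ∈ G ∩ G', g)
        ∈ {v : V | ∃ α : V → ℝ, (∀ g ∈ G, 0 < α g) ∧ v = ∑ g ∈ G, α g • g} := by
      refine ⟨fun g => if g = f then ε * γ f else 1 + ε * γ g, ?_, ?_⟩
      · intro g hg
        by_cases hgf : g = f
        · simp only [hgf, if_pos rfl]; positivity
        · simp only [if_neg hgf]
          rw [hGeq] at hg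
          rcases Finset.mem_insert.mp hg with h | h
          · exact absurd h hgf
          · exact hbound g h
      · conv_rhs => rw [hGeq]
        rw [Finset.sum_insert hfni]
        beta_reduce
        rw [if_pos rfl]
        have hsum : ∑ g ∈ G ∩ G', (if g = f then ε * γ f else 1 + ε * γ g) • g
            = ∑ g ∈ G ∩ G', ((1 : ℝ) • g + ε • γ g • g) := by
          refine Finset.sum_congr rfl fun g hg => ?_
          have hne : g ≠ f := fun h => hfni (h ▸ hg)
          rw [if_neg hne, add_smul, smul_smul, one_smul]
        have hfs : ε • f' = (ε * γ f) • f + ε • ∑ g ∈ G ∩ G', γ g • g := by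
          rw [← smul_smul, ← smul_add, ← hsplit]
        rw [hsum, Finset.sum_add_distrib, hfs, Finset.smul_sum]
        simp only [one_smul]
        abel
    have hmem2 : (ε • f' + ∑ g ∈ G ∩ G', g)
        ∈ {v : V | ∃ α : V → ℝ, (∀ g ∈ G', 0 < α g) ∧ v = ∑ g ∈ G', α g • g} := by
      refine ⟨fun g => if g = f' then ε else 1, ?_, ?_⟩
      · intro g _
        by_cases hgf : g = f'
        · simp [hgf, hεpos]
        · simp [hgf]
      · conv_rhs => rw [hG'eq]
        rw [Finset.sum_insert hf'ni]
        beta_reduce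
        rw [if_pos rfl]
        congr 1
        refine Finset.sum_congr rfl fun g hg => ?_
        have hne : g ≠ f' := fun h => hf'ni (h ▸ hg)
        rw [if_neg hne, one_smul]
    exact Set.not_disjoint_iff.mpr ⟨_, hmem1, hmem2⟩ hdisj
  · -- negative product → disjoint
    intro hlt
    rw [Set.disjoint_left]
    rintro v ⟨α, hαpos, rfl⟩ ⟨β, hβpos, hveq⟩
    have h1 : ⟪∑ g ∈ G, α g • g, t⟫ = α f * ⟪f, t⟫ := by
      conv_lhs => rw [hGeq]
      exact key f hfni α
    have h2 : ⟪∑ g ∈ G, α g • g, t⟫ = β f' * ⟪f', t⟫ := by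
      rw [hveq]
      conv_lhs => rw [hG'eq]
      exact key f' hf'ni β
    have heq : α f * ⟪f, t⟫ = β f' * ⟪f', t⟫ := by rw [← h1, ← h2]
    have ha := hαpos f hfG
    have hb := hβpos f' hf'G'
    have h3 : α f * (⟪f, t⟫ * ⟪f', t⟫) = β f' * (⟪f', t⟫ * ⟪f', t⟫) := by
      linear_combination ⟪f', t⟫ * heq
    have h4 : α f * (⟪f, t⟫ * ⟪f', t⟫) < 0 := mul_neg_of_pos_of_neg ha hlt
    have h5 : 0 ≤ β f' * (⟪f', t⟫ * ⟪f', t⟫) := mul_nonneg hb.le (mul_self_nonneg _)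
    linarith
end

section
/- Let F be a finite set of vectors in a finite-dimensional real inner product space V, let G ⊆ F be a basis of V such that no f ∈ F \ G lies in cone(G), and fix x ∈ V. Define b_f = x·f for f ∈ G and b_f = x·f − 1 for f ∈ F \ G, and let C = {y ∈ V : y·f ≥ b_f for all f ∈ F}. Then x is an extreme point of C and the normal cone of C at x equals cone(G). -/
open RealInnerProductSpace

private lemma eq_of_inner_eq_on_span {V : Type*} [NormedAddCommGroup V]
    [InnerProductSpace ℝ V] [FiniteDimensional ℝ V]
    (G : Finset V) (hGsp : Submodule.span ℝ (G : Set V) = ⊤) (z : V)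
    (hz : ∀ g ∈ G, ⟪z, g⟫ = 0) : z = 0 := by
  have h : ∀ w : V, ⟪z, w⟫ = 0 := by
    intro w
    have hw : w ∈ Submodule.span ℝ (G : Set V) := by rw [hGsp]; trivial
    induction hw using Submodule.span_induction with
    | mem g hg => exact hz g hg
    | zero => simp
    | add a b _ _ ha hb => rw [inner_add_right, ha, hb]; ring
    | smul c a _ ha => rw [inner_smul_right, ha]; ring
  have := h z
  rwa [inner_self_eq_zero] at this

/-- Given a basis `G ⊆ F` with no other element of `F` in `cone G`, the polyhedron built
with `b f = x·f` on `G` and `b f = x·f - 1` outside has `x` as extreme point, with normal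
cone equal to `cone G`. -/
theorem stmt2 {V : Type*} [NormedAddCommGroup V] [InnerProductSpace ℝ V]
    [FiniteDimensional ℝ V] [DecidableEq V]
    (F G : Finset V) (hGF : G ⊆ F)
    (hGli : LinearIndependent ℝ ((↑) : ↥(G : Set V) → V))
    (hGsp : Submodule.span ℝ (G : Set V) = ⊤)
    (hno : ∀ f ∈ F, f ∉ G →
      f ∉ {v : V | ∃ α : V → ℝ, (∀ g ∈ G, 0 ≤ α g) ∧ v = ∑ g ∈ G, α g • g})
    (x : V) (b : V → ℝ)
    (hb : ∀ f ∈ F, b f = if f ∈ G then ⟪x, f⟫ else ⟪x, f⟫ - 1)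
    (C : Set V) (hC : C = {y : V | ∀ f ∈ F, b f ≤ ⟪y, f⟫}) :
    x ∈ C.extremePoints ℝ ∧
    {v : V | ∀ y ∈ C, ⟪x, v⟫ ≤ ⟪y, v⟫} =
      {v : V | ∃ α : V → ℝ, (∀ g ∈ G, 0 ≤ α g) ∧ v = ∑ g ∈ G, α g • g} := by
  subst hC
  -- x is in C
  have hxC : x ∈ {y : V | ∀ f ∈ F, b f ≤ ⟪y, f⟫} := by
    intro f hf
    rw [hb f hf]
    split
    · exact le_refl _
    · linarith
  -- key rigidity: equal inner products on G forces equality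
  have key : ∀ y : V, (∀ g ∈ G, ⟪x, g⟫ ≤ ⟪y, g⟫ ∧ ⟪y, g⟫ ≤ ⟪x, g⟫) → y = x := by
    intro y hy
    have h0 : y - x = 0 := by
      refine eq_of_inner_eq_on_span G hGsp _ (fun g hg => ?_)
      have := hy g hg
      rw [inner_sub_left]
      linarith [this.1, this.2]
    have := sub_eq_zero.mp h0
    exact this
  -- the basis
  have hGsp' : ⊤ ≤ Submodule.span ℝ (Set.range ((↑) : ↥(G : Set V) → V)) := by
    rw [Subtype.range_coe, hGsp]
  let B : Module.Basis ↥(G : Set V) ℝ V := Module.Basis.mk hGli hGsp'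
  have hB : ∀ i : ↥(G : Set V), B i = (i : V) := fun i => by
    simp [B, Module.Basis.coe_mk]
  constructor
  · -- extreme point
    refine ⟨hxC, ?_⟩
    intro x₁ hx₁ x₂ hx₂ hseg
    obtain ⟨a, c, ha, hc, hac, hsum⟩ := hseg
    have hgeq : ∀ g ∈ G, (⟪x, g⟫ ≤ ⟪x₁, g⟫ ∧ ⟪x₁, g⟫ ≤ ⟪x, g⟫) ∧
        (⟪x, g⟫ ≤ ⟪x₂, g⟫ ∧ ⟪x₂, g⟫ ≤ ⟪x, g⟫) := by
      intro g hg
      have h1 := hx₁ g (hGF hg)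
      have h2 := hx₂ g (hGF hg)
      rw [hb g (hGF hg), if_pos hg] at h1 h2
      have hsum' : a * ⟪x₁, g⟫ + c * ⟪x₂, g⟫ = ⟪x, g⟫ := by
        rw [← hsum, inner_add_left, real_inner_smul_left, real_inner_smul_left]
      have hq : a * ⟪x, g⟫ + c * ⟪x, g⟫ = ⟪x, g⟫ := by
        linear_combination (⟪x, g⟫ : ℝ) * hac
      have h1' := mul_le_mul_of_nonneg_left h1 ha.le
      have h2' := mul_le_mul_of_nonneg_left h2 hc.le
      constructor
      · refine ⟨h1, le_of_mul_le_mul_left ?_ ha⟩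
        linarith
      · refine ⟨h2, le_of_mul_le_mul_left ?_ hc⟩
        linarith
    exact key x₁ (fun g hg => (hgeq g hg).1)
  · ext v
    simp only [Set.mem_setOf_eq]
    constructor
    · -- normal cone ⊆ cone G
      intro hv
      refine ⟨fun g => if h : g ∈ G then B.repr v ⟨g, h⟩ else 0, ?_, ?_⟩
      · intro g₀ hg₀
        simp only [dif_pos hg₀]
        set i₀ : ↥(G : Set V) := ⟨g₀, hg₀⟩
        set w : V := (InnerProductSpace.toDual ℝ V).symm
          (LinearMap.toContinuousLinearMap (B.coord i₀)) with hw
        have hwy : ∀ y : V, ⟪w, y⟫ = B.coord i₀ y := by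
          intro y; rw [hw, InnerProductSpace.toDual_symm_apply]; rfl
        -- value of w on elements of G is 0 or 1
        have hwG : ∀ g (hg : g ∈ G), 0 ≤ ⟪w, g⟫ := by
          intro g hg
          rw [hwy]
          have : g = B ⟨g, hg⟩ := (hB ⟨g, hg⟩).symm
          rw [this, Module.Basis.coord_apply, Module.Basis.repr_self, Finsupp.single_apply]
          split <;> norm_num
        set M : ℝ := ∑ f ∈ F, |⟪w, f⟫| with hM
        have hM0 : 0 ≤ M := Finset.sum_nonneg fun f _ => abs_nonneg _
        have hMf : ∀ f ∈ F, |⟪w, f⟫| ≤ M :=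
          fun f hf => Finset.single_le_sum (f := fun f => |⟪w, f⟫|) (fun g _ => abs_nonneg _) hf
        set ε : ℝ := (M + 1)⁻¹ with hε
        have hε0 : 0 < ε := by positivity
        have hy : x + ε • w ∈ {y : V | ∀ f ∈ F, b f ≤ ⟪y, f⟫} := by
          intro f hf
          rw [hb f hf, inner_add_left, real_inner_smul_left]
          by_cases hfG : f ∈ G
          · rw [if_pos hfG]
            have h0 := mul_nonneg hε0.le (hwG f hfG)
            linarith
          · rw [if_neg hfG]
            have h1 := hMf f hf
            have h3 : -M ≤ ⟪w, f⟫ := by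
              have := neg_abs_le ⟪w, f⟫; linarith
            have h4 := mul_le_mul_of_nonneg_left h3 hε0.le
            have h5 : ε * M ≤ 1 := by
              rw [hε, inv_mul_le_iff₀ (by linarith : (0:ℝ) < M + 1)]
              linarith
            nlinarith
        have hthis := hv _ hy
        rw [inner_add_left, real_inner_smul_left] at hthis
        have h6 : 0 ≤ ⟪w, v⟫ :=
          le_of_mul_le_mul_left (by linarith : ε * 0 ≤ ε * ⟪w, v⟫) hε0
        rw [hwy] at h6
        exact h6
      · -- v = sum
        show v = ∑ g ∈ G, (if h : g ∈ G then B.repr v ⟨g, h⟩ else 0) • g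
        calc v = ∑ i : ↥(G : Set V), B.repr v i • B i := (B.sum_repr v).symm
          _ = ∑ i : ↥(G : Set V), (if h : (i : V) ∈ G then B.repr v ⟨(i : V), h⟩ else 0) • (i : V) := by
              refine Finset.sum_congr rfl (fun i _ => ?_)
              have hi : (i : V) ∈ G := i.2
              rw [hB i, dif_pos hi]
          _ = ∑ g ∈ G, (if h : g ∈ G then B.repr v ⟨g, h⟩ else 0) • g :=
              Finset.sum_finset_coe (fun g => (if h : g ∈ G then B.repr v ⟨g, h⟩ else 0) • g) G
    · -- cone G ⊆ normal cone
      rintro ⟨α, hα, rfl⟩ y hy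
      rw [inner_sum, inner_sum]
      refine Finset.sum_le_sum (fun g hg => ?_)
      rw [real_inner_smul_right, real_inner_smul_right]
      have h1 := hy g (hGF hg)
      rw [hb g (hGF hg), if_pos hg] at h1
      exact mul_le_mul_of_nonneg_left h1 (hα g hg)
end

section
/- Let A be a finite collection of subsets of a finite set Ω, containing Ω, such that the indicator functions of sets in A are linearly independent and for no B ∉ A with B ⊆ Ω does the indicator of B lie in the set {∑_{A∈𝒜\{Ω}} α_A 1_A + β 1_Ω : α_A ≥ 0, β ∈ ℝ}. Then (i) any two sets A₁, A₂ ∈ A have nonempty intersection, and (ii) any two sets A₁, A₂ ∈ A \ {Ω} satisfy A₁ ∪ A₂ ≠ Ω. -/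
private lemma sum_single' {Ω : Type*} [DecidableEq Ω]
    {s : Finset (Finset Ω)} {C : Finset Ω} (hC : C ∈ s) (v : Finset Ω → Ω → ℝ) :
    ∑ A ∈ s, (if A = C then (1:ℝ) else 0) • v A = v C := by
  rw [Finset.sum_eq_single C (fun b _ hb => by simp [hb]) (fun h => absurd hC h)]
  simp

/-- If a collection `𝒜` of subsets of a finite `Ω` containing `Ω` has linearly
independent indicators and no indicator of a set outside `𝒜` lies in the generated cone,
then `𝒜` is intersecting and no two proper members cover `Ω`. -/
theorem stmt4 {Ω : Type*} [Fintype Ω] [DecidableEq Ω]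
    (𝒜 : Finset (Finset Ω)) (hΩ : Finset.univ ∈ 𝒜)
    (ind : Finset Ω → Ω → ℝ) (hind : ∀ A x, ind A x = if x ∈ A then 1 else 0)
    (hli : LinearIndependent ℝ (fun A : 𝒜 => ind A))
    (hB : ∀ B : Finset Ω, B ∉ 𝒜 →
      ¬ ∃ (α : Finset Ω → ℝ) (β : ℝ), (∀ A ∈ 𝒜.erase Finset.univ, 0 ≤ α A) ∧
        ind B = (∑ A ∈ 𝒜.erase Finset.univ, α A • ind A) + β • ind Finset.univ) :
    (∀ A₁ ∈ 𝒜, ∀ A₂ ∈ 𝒜, (A₁ ∩ A₂).Nonempty) ∧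
    (∀ A₁ ∈ 𝒜.erase Finset.univ, ∀ A₂ ∈ 𝒜.erase Finset.univ,
      A₁ ∪ A₂ ≠ Finset.univ) := by
  have hne : ∀ A ∈ 𝒜, A ≠ ∅ := by
    intro A hA h
    have h0 := hli.ne_zero ⟨A, hA⟩
    apply h0
    funext x
    simp [hind, h]
  have hli' := Fintype.linearIndependent_iff.mp hli
  constructor
  · -- intersecting
    intro A₁ h₁ A₂ h₂
    by_contra hcon
    have hd : A₁ ∩ A₂ = ∅ := Finset.not_nonempty_iff_eq_empty.mp hcon
    have hdx : ∀ x, ¬(x ∈ A₁ ∧ x ∈ A₂) := by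
      rintro x ⟨u, v⟩
      simpa [hd] using Finset.mem_inter.mpr ⟨u, v⟩
    have hA12 : A₁ ≠ A₂ := by
      rintro rfl
      exact hne A₁ h₁ (by simpa using hd)
    set B := A₁ ∪ A₂ with hBdef
    have hid : ind B = ind A₁ + ind A₂ := by
      funext x
      have := hdx x
      simp only [Pi.add_apply, hind, hBdef, Finset.mem_union]
      by_cases h1 : x ∈ A₁ <;> by_cases h2 : x ∈ A₂ <;> simp_all
    have hBA1 : B ≠ A₁ := by
      intro h
      apply hne A₂ h₂
      have hsub : A₂ ⊆ A₁ := h ▸ Finset.subset_union_right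
      rw [← hd]
      exact (Finset.inter_eq_right.mpr hsub).symm
    have hBA2 : B ≠ A₂ := by
      intro h
      apply hne A₁ h₁
      have hsub : A₁ ⊆ A₂ := h ▸ Finset.subset_union_left
      rw [← hd]
      exact (Finset.inter_eq_left.mpr hsub).symm
    by_cases hBmem : B ∈ 𝒜
    · -- linear dependence contradiction
      set F : Finset Ω → ℝ := fun A =>
        (if A = B then 1 else 0) - (if A = A₁ then 1 else 0) - (if A = A₂ then 1 else 0)
        with hF
      have hsum : ∑ a : 𝒜, F ↑a • ind ↑a = 0 := by
        rw [Finset.sum_coe_sort 𝒜 (fun A => F A • ind A)]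
        have hcongr : ∀ A ∈ 𝒜, F A • ind A =
            (if A = B then (1:ℝ) else 0) • ind A - (if A = A₁ then (1:ℝ) else 0) • ind A
              - (if A = A₂ then (1:ℝ) else 0) • ind A := by
          intro A _
          simp [hF, sub_smul]
        rw [Finset.sum_congr rfl hcongr, Finset.sum_sub_distrib, Finset.sum_sub_distrib,
          sum_single' hBmem, sum_single' h₁, sum_single' h₂, hid]
        abel
      have := hli' (fun a => F ↑a) hsum ⟨B, hBmem⟩
      simp [hF, hBA1, hBA2] at this
    · -- cone contradiction
      have hA1u : A₁ ≠ Finset.univ := by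
        rintro rfl
        exact hBmem (by
          rw [hBdef, Finset.eq_univ_of_forall fun x => Finset.mem_union_left _ (Finset.mem_univ x)]
          exact hΩ)
      have hA2u : A₂ ≠ Finset.univ := by
        rintro rfl
        exact hBmem (by
          rw [hBdef, Finset.eq_univ_of_forall fun x => Finset.mem_union_right _ (Finset.mem_univ x)]
          exact hΩ)
      apply hB B hBmem
      refine ⟨fun A => (if A = A₁ then 1 else 0) + (if A = A₂ then 1 else 0), 0, ?_, ?_⟩
      · intro A _
        positivity
      · have hcongr : ∀ A ∈ 𝒜.erase Finset.univ,
            ((if A = A₁ then (1:ℝ) else 0) + (if A = A₂ then (1:ℝ) else 0)) • ind A =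
            (if A = A₁ then (1:ℝ) else 0) • ind A + (if A = A₂ then (1:ℝ) else 0) • ind A := by
          intro A _
          rw [add_smul]
        rw [Finset.sum_congr rfl hcongr, Finset.sum_add_distrib,
          sum_single' (Finset.mem_erase.mpr ⟨hA1u, h₁⟩),
          sum_single' (Finset.mem_erase.mpr ⟨hA2u, h₂⟩), hid]
        simp
  · -- no two proper members cover
    intro A₁ h₁ A₂ h₂ hcov
    obtain ⟨hA1u, h₁'⟩ := Finset.mem_erase.mp h₁
    obtain ⟨hA2u, h₂'⟩ := Finset.mem_erase.mp h₂
    have hcx : ∀ x : Ω, x ∈ A₁ ∨ x ∈ A₂ := by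
      intro x
      have : x ∈ A₁ ∪ A₂ := hcov ▸ Finset.mem_univ x
      exact Finset.mem_union.mp this
    have hA12 : A₁ ≠ A₂ := by
      rintro rfl
      exact hA1u (by simpa using hcov)
    set B := A₁ ∩ A₂ with hBdef
    have hid : ind B = (ind A₁ + ind A₂) + (-1 : ℝ) • ind Finset.univ := by
      funext x
      rcases hcx x with h1 | h2
      · by_cases h2 : x ∈ A₂ <;>
          simp only [Pi.add_apply, Pi.smul_apply, hind, hBdef, Finset.mem_inter, Finset.mem_univ,
            if_true, smul_eq_mul, h1, h2, and_true, and_false, if_false] <;> norm_num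
      · by_cases h1 : x ∈ A₁ <;>
          simp only [Pi.add_apply, Pi.smul_apply, hind, hBdef, Finset.mem_inter, Finset.mem_univ,
            if_true, smul_eq_mul, h1, h2, true_and, false_and, if_false] <;> norm_num
    have hBA1 : B ≠ A₁ := by
      intro h
      apply hA2u
      have hsub : A₁ ⊆ A₂ := by
        intro x hx
        have : x ∈ B := h ▸ hx
        exact (Finset.mem_inter.mp this).2
      rw [← hcov, Finset.union_eq_right.mpr hsub]
    have hBA2 : B ≠ A₂ := by
      intro h
      apply hA1u
      have hsub : A₂ ⊆ A₁ := by
        intro x hx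
        have : x ∈ B := h ▸ hx
        exact (Finset.mem_inter.mp this).1
      rw [← hcov, Finset.union_eq_left.mpr hsub]
    have hBu : B ≠ Finset.univ := by
      intro h
      apply hA1u
      apply Finset.eq_univ_of_forall
      intro x
      have : x ∈ B := h ▸ Finset.mem_univ x
      exact (Finset.mem_inter.mp this).1
    by_cases hBmem : B ∈ 𝒜
    · set F : Finset Ω → ℝ := fun A =>
        (if A = B then 1 else 0) - (if A = A₁ then 1 else 0) - (if A = A₂ then 1 else 0)
          + (if A = Finset.univ then 1 else 0) with hF
      have hsum : ∑ a : 𝒜, F ↑a • ind ↑a = 0 := by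
        rw [Finset.sum_coe_sort 𝒜 (fun A => F A • ind A)]
        have hcongr : ∀ A ∈ 𝒜, F A • ind A =
            (if A = B then (1:ℝ) else 0) • ind A - (if A = A₁ then (1:ℝ) else 0) • ind A
              - (if A = A₂ then (1:ℝ) else 0) • ind A
              + (if A = Finset.univ then (1:ℝ) else 0) • ind A := by
          intro A _
          simp [hF, sub_smul, add_smul]
        rw [Finset.sum_congr rfl hcongr, Finset.sum_add_distrib, Finset.sum_sub_distrib,
          Finset.sum_sub_distrib, sum_single' hBmem, sum_single' h₁', sum_single' h₂',
          sum_single' hΩ, hid]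
        module
      have := hli' (fun a => F ↑a) hsum ⟨B, hBmem⟩
      simp [hF, hBA1, hBA2, hBu] at this
    · apply hB B hBmem
      refine ⟨fun A => (if A = A₁ then 1 else 0) + (if A = A₂ then 1 else 0), -1, ?_, ?_⟩
      · intro A _
        positivity
      · have hcongr : ∀ A ∈ 𝒜.erase Finset.univ,
            ((if A = A₁ then (1:ℝ) else 0) + (if A = A₂ then (1:ℝ) else 0)) • ind A =
            (if A = A₁ then (1:ℝ) else 0) • ind A + (if A = A₂ then (1:ℝ) else 0) • ind A := by
          intro A _
          rw [add_smul]
        rw [Finset.sum_congr rfl hcongr, Finset.sum_add_distrib,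
          sum_single' h₁, sum_single' h₂, hid]
end

section
/- A finite set H of real-valued functions on a finite set Ω is comonotone (every pair f, g ∈ H satisfies: f(x) > f(y) implies g(x) ≥ g(y)) if and only if the cone of all nonnegative linear combinations of elements of H is a comonotone set. -/
/-- A finite set `H` of functions on a finite set is comonotone iff the cone of its
nonnegative linear combinations is a comonotone set. -/
theorem stmt6 {Ω : Type*} [Fintype Ω]
    (H : Finset (Ω → ℝ)) :
    (∀ f ∈ H, ∀ g ∈ H, ∀ x y : Ω, f x > f y → g x ≥ g y) ↔
    (∀ f ∈ {v : Ω → ℝ | ∃ α : (Ω → ℝ) → ℝ, (∀ h ∈ H, 0 ≤ α h) ∧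
        v = ∑ h ∈ H, α h • h},
      ∀ g ∈ {v : Ω → ℝ | ∃ α : (Ω → ℝ) → ℝ, (∀ h ∈ H, 0 ≤ α h) ∧
        v = ∑ h ∈ H, α h • h},
      ∀ x y : Ω, f x > f y → g x ≥ g y) := by
  classical
  constructor
  · intro hcom f hf g hg x y hxy
    obtain ⟨α, hα, rfl⟩ := hf
    obtain ⟨β, hβ, rfl⟩ := hg
    simp only [Finset.sum_apply, Pi.smul_apply, smul_eq_mul] at hxy ⊢
    have hex : ∃ h ∈ H, h x > h y := by
      by_contra hc
      push_neg at hc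
      have : ∑ h ∈ H, α h * h x ≤ ∑ h ∈ H, α h * h y :=
        Finset.sum_le_sum fun h hh => mul_le_mul_of_nonneg_left (hc h hh) (hα h hh)
      linarith
    obtain ⟨h0, hh0, hx0⟩ := hex
    exact Finset.sum_le_sum fun h hh =>
      mul_le_mul_of_nonneg_left (hcom h0 hh0 h hh x y hx0) (hβ h hh)
  · intro hcone f hf g hg x y hxy
    have mem : ∀ h ∈ H, h ∈ {v : Ω → ℝ | ∃ α : (Ω → ℝ) → ℝ, (∀ h ∈ H, 0 ≤ α h) ∧
        v = ∑ h ∈ H, α h • h} := by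
      intro h hh
      refine ⟨fun h' => if h' = h then 1 else 0, fun h' _ => by positivity, ?_⟩
      simp [ite_smul, Finset.sum_ite_eq', hh]
    exact hcone f (mem f hf) g (mem g hg) x y hxy
end

section
/- A finite set H of real-valued functions on a finite set Ω is comonotone if and only if there exists an enumeration x₁, …, x_n of Ω such that f(x_i) ≤ f(x_{i+1}) for every f ∈ H and every 1 ≤ i ≤ n−1. -/
/-- A finite set `H` of functions on a finite set `Ω` is comonotone iff there is an
enumeration `x₁, …, x_n` of `Ω` along which every `f ∈ H` is nondecreasing. -/
theorem stmt7 {Ω : Type*} [Fintype Ω] (H : Finset (Ω → ℝ)) :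
    (∀ f ∈ H, ∀ g ∈ H, ∀ x y : Ω, f x > f y → g x ≥ g y) ↔
    (∃ e : Fin (Fintype.card Ω) ≃ Ω, ∀ f ∈ H, ∀ i : Fin (Fintype.card Ω),
      ∀ h : (i : ℕ) + 1 < Fintype.card Ω, f (e i) ≤ f (e ⟨(i : ℕ) + 1, h⟩)) := by
  classical
  constructor
  · intro hH
    set r : Ω → Ω → Prop := fun x y => ∀ f ∈ H, f x ≤ f y with hr
    haveI : DecidableRel r := fun _ _ => Classical.dec _
    haveI : IsTrans Ω r := ⟨fun a b c hab hbc f hf => (hab f hf).trans (hbc f hf)⟩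
    haveI : IsTotal Ω r := by
      constructor
      intro x y
      by_cases h : r x y
      · exact Or.inl h
      · right
        simp only [hr, not_forall] at h
        obtain ⟨f, hf, hfx⟩ := h
        intro g hg
        exact hH f hf g hg x y (lt_of_not_ge hfx)
    set l : List Ω := List.insertionSort r Finset.univ.toList with hl
    have hperm : l.Perm Finset.univ.toList := List.perm_insertionSort r _
    have hnd : l.Nodup := hperm.nodup_iff.2 Finset.univ.nodup_toList
    have hmem : ∀ x : Ω, x ∈ l := fun x => hperm.mem_iff.2 (by simp)
    have hlen : Fintype.card Ω = l.length := by
      rw [hperm.length_eq, Finset.length_toList, Finset.card_univ]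
    have hsorted : l.Pairwise r := List.pairwise_insertionSort r _
    refine ⟨(finCongr hlen).trans (List.Nodup.getEquivOfForallMemList l hnd hmem), ?_⟩
    intro f hf i h
    have : r (l.get (Fin.cast hlen i)) (l.get ⟨(i : ℕ) + 1, hlen ▸ h⟩) :=
      hsorted.rel_get_of_lt (by simp [Fin.lt_def])
    exact this f hf
  · rintro ⟨e, he⟩ f hf g hg x y hxy
    have mono : ∀ f ∈ H, ∀ i j : Fin (Fintype.card Ω), i ≤ j → f (e i) ≤ f (e j) := by
      intro f hf i j hij
      obtain ⟨j, hj⟩ := j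
      induction j with
      | zero =>
        have : i = ⟨0, hj⟩ := le_antisymm hij (Fin.mk_le_mk.2 (Nat.zero_le _))
        rw [this]
      | succ k ih =>
        have hk : k < Fintype.card Ω := Nat.lt_of_succ_lt hj
        rcases Nat.lt_or_ge (i : ℕ) (k + 1) with h | h
        · exact (ih hk (Fin.mk_le_mk.2 (Nat.lt_succ_iff.1 h))).trans (he f hf ⟨k, hk⟩ hj)
        · have : i = ⟨k + 1, hj⟩ := le_antisymm hij (Fin.mk_le_mk.2 h)
          rw [this]
    by_cases hle : e.symm x ≤ e.symm y
    · exact absurd (by simpa using mono f hf _ _ hle) (not_le.2 hxy)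
    · have := mono g hg _ _ (le_of_not_ge hle)
      simpa using this
end

section
/- Let A₁ and A₂ be chains of subsets of a finite set Ω, each containing Ω, and let cone(A_i) = {∑_{A∈A_i\{Ω}} α_A 1_A + β 1_Ω : α_A ≥ 0, β ∈ ℝ}. Then cone(A₁) ∩ cone(A₂) = cone(A₁ ∩ A₂). -/
lemma fwd_aux {Ω : Type*} [Fintype Ω] [DecidableEq (Set Ω)] (𝒜 : Finset (Set Ω))
    (hU : Set.univ ∈ 𝒜)
    (hc : ∀ A ∈ 𝒜, ∀ B ∈ 𝒜, A ⊆ B ∨ B ⊆ A)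
    (f : Ω → ℝ) (α : Set Ω → ℝ) (β : ℝ)
    (hα : ∀ A ∈ 𝒜.erase Set.univ, 0 ≤ α A)
    (hf : f = (∑ A ∈ 𝒜.erase Set.univ, α A • Set.indicator A (fun _ => (1 : ℝ)))
          + β • Set.indicator Set.univ (fun _ => (1 : ℝ)))
    (t : ℝ) : {x | t < f x} = ∅ ∨ {x | t < f x} ∈ 𝒜 := by
  classical
  set E := 𝒜.erase Set.univ with hE
  set C : Ω → Finset (Set Ω) := fun x => E.filter (fun A => x ∈ A) with hC
  have hfval : ∀ x, f x = (∑ A ∈ C x, α A) + β := by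
    intro x
    rw [hf]
    simp [Pi.add_apply, Finset.sum_apply, Pi.smul_apply, Set.indicator_apply, hC,
      Finset.sum_filter, smul_eq_mul, mul_ite, mul_one, mul_zero]
  have hmono : ∀ x y, C x ⊆ C y → f x ≤ f y := by
    intro x y hxy
    rw [hfval, hfval]
    refine add_le_add_left (Finset.sum_le_sum_of_subset_of_nonneg hxy ?_) β
    intro A hA _
    exact hα A (Finset.mem_filter.mp hA).1
  have hcomp : ∀ x y, C x ⊆ C y ∨ C y ⊆ C x := by
    intro x y
    by_cases hxy : C x ⊆ C y
    · exact Or.inl hxy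
    · right
      obtain ⟨A, hAx, hAy⟩ := Finset.not_subset.mp hxy
      intro B hBy
      have hAE : A ∈ E := (Finset.mem_filter.mp hAx).1
      have hBE : B ∈ E := (Finset.mem_filter.mp hBy).1
      have hA : A ∈ 𝒜 := Finset.mem_of_mem_erase hAE
      have hB : B ∈ 𝒜 := Finset.mem_of_mem_erase hBE
      rcases hc A hA B hB with hAB | hBA
      · exact Finset.mem_filter.mpr ⟨hBE, hAB (Finset.mem_filter.mp hAx).2⟩
      · exact absurd (Finset.mem_filter.mpr ⟨hAE, hBA (Finset.mem_filter.mp hBy).2⟩) hAy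
  by_cases hS : {x | t < f x} = ∅
  · exact Or.inl hS
  · right
    have hS' : (Finset.univ.filter (fun x => t < f x)).Nonempty := by
      obtain ⟨x, hx⟩ := Set.nonempty_iff_ne_empty.mpr hS
      exact ⟨x, Finset.mem_filter.mpr ⟨Finset.mem_univ x, hx⟩⟩
    obtain ⟨x₀, hx₀S, hx₀min⟩ := Finset.exists_min_image _ (fun x => (C x).card) hS'
    have hx₀ : t < f x₀ := (Finset.mem_filter.mp hx₀S).2
    have hkey : ∀ y, t < f y → C x₀ ⊆ C y := by
      intro y hy
      rcases hcomp x₀ y with h | h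
      · exact h
      · have hle : (C x₀).card ≤ (C y).card :=
          hx₀min y (Finset.mem_filter.mpr ⟨Finset.mem_univ y, hy⟩)
        rw [Finset.eq_of_subset_of_card_le h hle]
    rcases Finset.eq_empty_or_nonempty (C x₀) with hCe | hCne
    · have : {x | t < f x} = Set.univ := by
        ext y
        simp only [Set.mem_setOf_eq, Set.mem_univ, iff_true]
        refine lt_of_lt_of_le hx₀ (hmono _ _ ?_)
        rw [hCe]
        exact Finset.empty_subset _
      rw [this]; exact hU
    · obtain ⟨A₀, hA₀C, hA₀min⟩ := Finset.exists_min_image (C x₀) (fun A => A.ncard) hCne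
      have hA₀𝒜 : A₀ ∈ 𝒜 := Finset.mem_of_mem_erase (Finset.mem_filter.mp hA₀C).1
      have hA₀sub : ∀ A ∈ C x₀, A₀ ⊆ A := by
        intro A hA
        have hA𝒜 : A ∈ 𝒜 := Finset.mem_of_mem_erase (Finset.mem_filter.mp hA).1
        rcases hc A₀ hA₀𝒜 A hA𝒜 with h | h
        · exact h
        · rw [Set.eq_of_subset_of_ncard_le h (hA₀min A hA) (Set.toFinite A₀)]
      have : {x | t < f x} = A₀ := by
        apply Set.Subset.antisymm
        · intro y hy
          exact (Finset.mem_filter.mp (hkey y hy hA₀C)).2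
        · intro y hy
          show t < f y
          refine lt_of_lt_of_le hx₀ (hmono _ _ ?_)
          intro A hA
          exact Finset.mem_filter.mpr ⟨(Finset.mem_filter.mp hA).1, hA₀sub A hA hy⟩
      rw [this]; exact hA₀𝒜
lemma back_aux {Ω : Type*} [Fintype Ω] [DecidableEq (Set Ω)] (𝒜 : Finset (Set Ω))
    (f : Ω → ℝ)
    (h : ∀ t : ℝ, {x | t < f x} = ∅ ∨ {x | t < f x} ∈ 𝒜) :
    ∃ (α : Set Ω → ℝ) (β : ℝ),
      (∀ A ∈ 𝒜.erase Set.univ, 0 ≤ α A) ∧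
      f = (∑ A ∈ 𝒜.erase Set.univ, α A • Set.indicator A (fun _ => (1 : ℝ)))
          + β • Set.indicator Set.univ (fun _ => (1 : ℝ)) := by
  classical
  suffices H : ∀ (n : ℕ) (f : Ω → ℝ), (Finset.image f Finset.univ).card ≤ n →
      (∀ t : ℝ, {x | t < f x} = ∅ ∨ {x | t < f x} ∈ 𝒜) →
      ∃ (α : Set Ω → ℝ) (β : ℝ),
        (∀ A ∈ 𝒜.erase Set.univ, 0 ≤ α A) ∧
        f = (∑ A ∈ 𝒜.erase Set.univ, α A • Set.indicator A (fun _ => (1 : ℝ)))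
            + β • Set.indicator Set.univ (fun _ => (1 : ℝ)) by
    exact H _ f le_rfl h
  intro n
  induction n with
  | zero =>
    intro f hcard _
    have hemp : Finset.image f Finset.univ = ∅ := Finset.card_eq_zero.mp (Nat.le_zero.mp hcard)
    have : IsEmpty Ω := by
      by_contra hne
      rw [not_isEmpty_iff] at hne
      obtain ⟨x⟩ := hne
      exact absurd (Finset.mem_image_of_mem f (Finset.mem_univ x)) (by rw [hemp]; simp)
    exact ⟨0, 0, fun A _ => le_rfl, funext fun x => isEmptyElim x⟩
  | succ n ih =>
    intro f hcard hh
    by_cases h1 : (Finset.image f Finset.univ).card ≤ 1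
    · cases isEmpty_or_nonempty Ω with
      | inl hE => exact ⟨0, 0, fun A _ => le_rfl, funext fun x => isEmptyElim x⟩
      | inr hne =>
        obtain ⟨x₀⟩ := hne
        refine ⟨0, f x₀, fun A _ => le_rfl, ?_⟩
        funext x
        have hfx : f x = f x₀ :=
          Finset.card_le_one.mp h1 _ (Finset.mem_image_of_mem f (Finset.mem_univ x)) _
            (Finset.mem_image_of_mem f (Finset.mem_univ x₀))
        simp [hfx, Set.indicator_univ]
    · push_neg at h1
      set V := Finset.image f Finset.univ with hV
      have hVne : V.Nonempty := Finset.card_pos.mp (by omega)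
      set M := V.max' hVne with hM
      have hVe : (V.erase M).Nonempty := by
        rw [← Finset.card_pos, Finset.card_erase_of_mem (V.max'_mem hVne)]
        omega
      set c := (V.erase M).max' hVe with hc
      have hcV : c ∈ V.erase M := Finset.max'_mem _ hVe
      have hcM : c < M :=
        lt_of_le_of_ne (Finset.le_max' V c (Finset.mem_of_mem_erase hcV))
          (Finset.mem_erase.mp hcV).1
      have hmem : ∀ x, f x ∈ V := fun x => Finset.mem_image_of_mem f (Finset.mem_univ x)
      have hval : ∀ x, f x = M ∨ f x ≤ c := by
        intro x
        by_cases hx : f x = M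
        · exact Or.inl hx
        · exact Or.inr (Finset.le_max' _ _ (Finset.mem_erase.mpr ⟨hx, hmem x⟩))
      set S := {x | c < f x} with hSdef
      have hSM : ∀ x, x ∈ S ↔ f x = M := by
        intro x
        constructor
        · intro hx
          rcases hval x with h' | h'
          · exact h'
          · exact absurd hx (not_lt.mpr h')
        · intro hx
          show c < f x
          rw [hx]; exact hcM
      have hSne : S ≠ ∅ := by
        obtain ⟨xM, _, hxM⟩ := Finset.mem_image.mp (hM ▸ V.max'_mem hVne)
        intro hS
        exact absurd ((hSM xM).mpr hxM) (by rw [hS]; simp)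
      have hS𝒜 : S ∈ 𝒜 := (hh c).resolve_left hSne
      have hSU : S ≠ Set.univ := by
        obtain ⟨xc, _, hxc⟩ := Finset.mem_image.mp (Finset.mem_of_mem_erase hcV)
        intro hU
        have : xc ∈ S := hU ▸ Set.mem_univ xc
        rw [hSM xc, hxc] at this
        exact (Finset.mem_erase.mp hcV).1 this
      set g : Ω → ℝ := fun x => if c < f x then c else f x with hg
      have hgle : ∀ x, g x ≤ c ∨ g x = f x := by
        intro x
        by_cases hx : c < f x
        · left; simp [hg, hx]
        · right; simp [hg, hx]
      have hgh : ∀ t : ℝ, {x | t < g x} = ∅ ∨ {x | t < g x} ∈ 𝒜 := by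
        intro t
        by_cases ht : t < c
        · have heq : {x | t < g x} = {x | t < f x} := by
            ext x
            simp only [Set.mem_setOf_eq, hg]
            by_cases hx : c < f x
            · simp only [hx, if_true]
              exact ⟨fun _ => ht.trans hx, fun _ => ht⟩
            · simp [hx]
          rw [heq]; exact hh t
        · left
          ext x
          simp only [Set.mem_setOf_eq, Set.mem_empty_iff_false, iff_false, not_lt, hg]
          by_cases hx : c < f x
          · simp only [hx, if_true]; linarith
          · simp only [hx, if_false]; push_neg at hx ht; linarith
      have hgcard : (Finset.image g Finset.univ).card ≤ n := by
        have hsub : Finset.image g Finset.univ ⊆ V.erase M := by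
          intro v hv
          obtain ⟨x, _, rfl⟩ := Finset.mem_image.mp hv
          by_cases hx : c < f x
          · simpa [hg, hx] using hcV
          · push_neg at hx
            simp only [hg, if_neg (not_lt.mpr hx)]
            exact Finset.mem_erase.mpr ⟨fun hfM => absurd (hfM ▸ hx) (not_le.mpr hcM), hmem x⟩
        have := Finset.card_le_card hsub
        rw [Finset.card_erase_of_mem (V.max'_mem hVne)] at this
        omega
      obtain ⟨α, β, hα, hgrep⟩ := ih g hgcard hgh
      refine ⟨fun A => if A = S then α A + (M - c) else α A, β, ?_, ?_⟩
      · intro A hA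
        by_cases hAS : A = S
        · simp only [hAS, if_true]
          have := hα A hA
          rw [hAS] at this
          linarith
        · simp only [hAS, if_false]
          exact hα A hA
      · have hsplit :
            (∑ A ∈ 𝒜.erase Set.univ,
              (if A = S then α A + (M - c) else α A) • Set.indicator A (fun _ => (1 : ℝ)))
            = (∑ A ∈ 𝒜.erase Set.univ, α A • Set.indicator A (fun _ => (1 : ℝ)))
              + (M - c) • Set.indicator S (fun _ => (1 : ℝ)) := by
          have hterm : ∀ A ∈ 𝒜.erase Set.univ,
              (if A = S then α A + (M - c) else α A) • Set.indicator A (fun _ => (1 : ℝ))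
              = α A • Set.indicator A (fun _ => (1 : ℝ))
                + (if A = S then (M - c) • Set.indicator S (fun _ => (1 : ℝ)) else 0) := by
            intro A _
            by_cases hAS : A = S
            · subst hAS
              simp [add_smul]
            · simp [hAS]
          rw [Finset.sum_congr rfl hterm, Finset.sum_add_distrib, Finset.sum_ite_eq']
          simp [Finset.mem_erase.mpr ⟨hSU, hS𝒜⟩]
        rw [hsplit]
        funext x
        have hgx := congrFun hgrep x
        simp only [Pi.add_apply, Pi.smul_apply, smul_eq_mul, Set.indicator_univ] at hgx ⊢
        by_cases hx : x ∈ S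
        · have hfx : f x = M := (hSM x).mp hx
          have hgxv : g x = c := by
            simp only [hg, if_pos (show c < f x from hx)]
          rw [hgxv] at hgx
          rw [Set.indicator_of_mem hx, hfx]
          linarith
        · have hgxv : g x = f x := by
            simp only [hg, if_neg (show ¬ c < f x from hx)]
          rw [hgxv] at hgx
          rw [Set.indicator_of_notMem hx]
          linarith

/-- For two chains `𝒜₁`, `𝒜₂` of subsets of a finite set, both containing `Ω`,
the intersection of the generated cones is the cone generated by `𝒜₁ ∩ 𝒜₂`. -/
theorem stmt11 {Ω : Type*} [Fintype Ω] [DecidableEq (Set Ω)]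
    (𝒜₁ 𝒜₂ : Finset (Set Ω))
    (h1 : Set.univ ∈ 𝒜₁) (h2 : Set.univ ∈ 𝒜₂)
    (hc1 : ∀ A ∈ 𝒜₁, ∀ B ∈ 𝒜₁, A ⊆ B ∨ B ⊆ A)
    (hc2 : ∀ A ∈ 𝒜₂, ∀ B ∈ 𝒜₂, A ⊆ B ∨ B ⊆ A)
    (cone : Finset (Set Ω) → Set (Ω → ℝ))
    (hcone : ∀ 𝒜, cone 𝒜 = {f | ∃ (α : Set Ω → ℝ) (β : ℝ),
      (∀ A ∈ 𝒜.erase Set.univ, 0 ≤ α A) ∧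
      f = (∑ A ∈ 𝒜.erase Set.univ, α A • Set.indicator A (fun _ => (1 : ℝ)))
          + β • Set.indicator Set.univ (fun _ => (1 : ℝ))}) :
    cone 𝒜₁ ∩ cone 𝒜₂ = cone (𝒜₁ ∩ 𝒜₂) := by
  classical
  have hUi : Set.univ ∈ 𝒜₁ ∩ 𝒜₂ := Finset.mem_inter.mpr ⟨h1, h2⟩
  have hci : ∀ A ∈ 𝒜₁ ∩ 𝒜₂, ∀ B ∈ 𝒜₁ ∩ 𝒜₂, A ⊆ B ∨ B ⊆ A := fun A hA B hB =>
    hc1 A (Finset.mem_of_mem_inter_left hA) B (Finset.mem_of_mem_inter_left hB)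
  ext f
  simp only [Set.mem_inter_iff, hcone, Set.mem_setOf_eq]
  constructor
  · rintro ⟨⟨α₁, β₁, hα₁, hf₁⟩, ⟨α₂, β₂, hα₂, hf₂⟩⟩
    apply back_aux
    intro t
    rcases fwd_aux 𝒜₁ h1 hc1 f α₁ β₁ hα₁ hf₁ t with hS | hS
    · exact Or.inl hS
    rcases fwd_aux 𝒜₂ h2 hc2 f α₂ β₂ hα₂ hf₂ t with hS' | hS'
    · exact Or.inl hS'
    · exact Or.inr (Finset.mem_inter.mpr ⟨hS, hS'⟩)
  · rintro ⟨α, β, hα, hf⟩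
    have hfwd := fwd_aux (𝒜₁ ∩ 𝒜₂) hUi hci f α β hα hf
    constructor
    · apply back_aux
      intro t
      rcases hfwd t with hS | hS
      · exact Or.inl hS
      · exact Or.inr (Finset.mem_of_mem_inter_left hS)
    · apply back_aux
      intro t
      rcases hfwd t with hS | hS
      · exact Or.inl hS
      · exact Or.inr (Finset.mem_of_mem_inter_right hS)
end

section
/- Let L be a 2-monotone lower probability on all subsets of a finite n-element set Ω (L(∅)=0, L(Ω)=1, L(A∪B)+L(A∩B) ≥ L(A)+L(B)). Then the credal set M(L) = {p : probability mass functions with ∑_{x∈A} p(x) ≥ L(A) for all A} has at most n! extreme points. -/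
/-- max of `L` over subsets of `S` -/
private noncomputable def stmt12gmax {Ω : Type*} [DecidableEq Ω] (L : Finset Ω → ℝ)
    (S : Finset Ω) : ℝ :=
  S.powerset.sup' (Finset.powerset_nonempty S) L

private lemma stmt12_le_gmax {Ω : Type*} [DecidableEq Ω] (L : Finset Ω → ℝ)
    {A S : Finset Ω} (h : A ⊆ S) : L A ≤ stmt12gmax L S :=
  Finset.le_sup' L (Finset.mem_powerset.2 h)

private lemma stmt12_gmax_le {Ω : Type*} [DecidableEq Ω] (L : Finset Ω → ℝ)
    {S : Finset Ω} {c : ℝ} (h : ∀ A ⊆ S, L A ≤ c) : stmt12gmax L S ≤ c :=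
  Finset.sup'_le _ _ fun A hA => h A (Finset.mem_powerset.1 hA)

private def stmt12Good {Ω : Type*} [DecidableEq Ω] (L : Finset Ω → ℝ) (p : Ω → ℝ)
    (S : Finset Ω) : Prop :=
  ∃ C : Finset Ω, (∑ a ∈ C, p a = L C) ∧ C ⊆ S ∧ ∑ a ∈ S, p a = ∑ a ∈ C, p a

private lemma stmt12_lattice {Ω : Type*} [DecidableEq Ω] (L : Finset Ω → ℝ) {p : Ω → ℝ}
    (h2mon : ∀ A B : Finset Ω, L A + L B ≤ L (A ∪ B) + L (A ∩ B))
    (hge : ∀ A : Finset Ω, L A ≤ ∑ x ∈ A, p x) {A B : Finset Ω}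
    (hA : ∑ x ∈ A, p x = L A) (hB : ∑ x ∈ B, p x = L B) :
    (∑ x ∈ A ∪ B, p x = L (A ∪ B)) ∧ (∑ x ∈ A ∩ B, p x = L (A ∩ B)) := by
  have hs : ((∑ x ∈ A ∪ B, p x) + ∑ x ∈ A ∩ B, p x) = (∑ x ∈ A, p x) + ∑ x ∈ B, p x :=
    Finset.sum_union_inter
  have h1 := hge (A ∪ B); have h2 := hge (A ∩ B); have h3 := h2mon A B
  constructor <;> linarith

private lemma stmt12_goodEval {Ω : Type*} [DecidableEq Ω] (L : Finset Ω → ℝ) {p : Ω → ℝ}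
    (hpos : ∀ x, 0 ≤ p x) (hge : ∀ A : Finset Ω, L A ≤ ∑ x ∈ A, p x) {S : Finset Ω}
    (h : stmt12Good L p S) : ∑ a ∈ S, p a = stmt12gmax L S := by
  obtain ⟨C, hCt, hCS, hsum⟩ := h
  apply le_antisymm
  · rw [hsum, hCt]; exact stmt12_le_gmax L hCS
  · apply stmt12_gmax_le
    intro A hA
    calc L A ≤ ∑ a ∈ A, p a := hge A
    _ ≤ ∑ a ∈ S, p a := Finset.sum_le_sum_of_subset_of_nonneg hA (fun i _ _ => hpos i)

private lemma stmt12_exchange {Ω : Type*} [Fintype Ω] [DecidableEq Ω] (L : Finset Ω → ℝ)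
    {M : Set (Ω → ℝ)} {p : Ω → ℝ}
    (hM : M = {p | (∀ x, 0 ≤ p x) ∧ (∑ x, p x) = 1 ∧
      ∀ A : Finset Ω, L A ≤ ∑ x ∈ A, p x})
    (hp : p ∈ M.extremePoints ℝ) {x y : Ω} (hxy : x ≠ y) (hx : 0 < p x) (hy : 0 < p y) :
    ∃ A : Finset Ω, (∑ a ∈ A, p a = L A) ∧ ¬(x ∈ A ↔ y ∈ A) := by
  classical
  by_contra hcon
  push_neg at hcon
  have hpM := hp.1
  rw [hM] at hpM
  obtain ⟨hpos, hsum, hge⟩ := hpM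
  set F : Finset (Finset Ω) := Finset.univ.filter (fun A => L A < ∑ a ∈ A, p a) with hF
  set E : Finset ℝ := insert (p x) (insert (p y)
    (F.image fun A => (∑ a ∈ A, p a) - L A)) with hE
  have hEne : E.Nonempty := ⟨p x, by simp [hE]⟩
  set ε := E.min' hEne with hεdef
  have hεpos : 0 < ε := by
    have hall : ∀ r ∈ E, 0 < r := by
      intro r hr
      simp only [hE, Finset.mem_insert, Finset.mem_image] at hr
      rcases hr with rfl | rfl | ⟨A, hA, rfl⟩
      · exact hx
      · exact hy
      · simp only [hF, Finset.mem_filter] at hA; linarith [hA.2]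
    exact hall _ (E.min'_mem hEne)
  have hεx : ε ≤ p x := Finset.min'_le _ _ (by simp [hE])
  have hεy : ε ≤ p y := Finset.min'_le _ _ (by simp [hE])
  have hslack : ∀ A : Finset Ω, ¬(∑ a ∈ A, p a = L A) → ε ≤ (∑ a ∈ A, p a) - L A := by
    intro A hA
    apply Finset.min'_le
    simp only [hE, Finset.mem_insert, Finset.mem_image]
    refine Or.inr (Or.inr ⟨A, ?_, rfl⟩)
    simp only [hF, Finset.mem_filter, Finset.mem_univ, true_and]
    exact lt_of_le_of_ne (hge A) (fun h => hA h.symm)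
  have hsplit : ∀ (u v : Ω), u ≠ v → ∀ A : Finset Ω,
      (∑ a ∈ A, (p a + (if a = u then ε else if a = v then -ε else 0)))
        = (∑ a ∈ A, p a) + ((if u ∈ A then ε else 0) + (if v ∈ A then -ε else 0)) := by
    intro u v huv A
    rw [Finset.sum_add_distrib]
    congr 1
    have heq : ∀ a ∈ A, (if a = u then ε else if a = v then -ε else 0) =
        ((if a = u then ε else 0) + (if a = v then -ε else 0)) := by
      intro a _
      by_cases h1 : a = u
      · subst h1; simp [huv]
      · by_cases h2 : a = v
        · subst h2; simp [h1, Ne.symm huv]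
        · simp [h1, h2]
    rw [Finset.sum_congr rfl heq, Finset.sum_add_distrib,
      Finset.sum_ite_eq' A u (fun _ => ε), Finset.sum_ite_eq' A v (fun _ => -ε)]
  have move : ∀ u v : Ω, u ≠ v → ε ≤ p v →
      (∀ A : Finset Ω, (∑ a ∈ A, p a = L A) → (u ∈ A ↔ v ∈ A)) →
      (fun a => p a + (if a = u then ε else if a = v then -ε else 0)) ∈ M := by
    intro u v huv hεv hsep
    rw [hM]
    refine ⟨?_, ?_, ?_⟩
    · intro a
      show 0 ≤ p a + (if a = u then ε else if a = v then -ε else 0)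
      by_cases h1 : a = u
      · rw [if_pos h1]; linarith [hpos a]
      · rw [if_neg h1]
        by_cases h2 : a = v
        · rw [if_pos h2, h2]; linarith
        · rw [if_neg h2]; linarith [hpos a]
    · rw [hsplit u v huv Finset.univ]
      simp only [Finset.mem_univ, if_pos]
      linarith [hsum]
    · intro A
      rw [hsplit u v huv A]
      by_cases h1 : u ∈ A <;> by_cases h2 : v ∈ A
      · simp only [if_pos h1, if_pos h2]; linarith [hge A]
      · simp only [if_pos h1, if_neg h2]; linarith [hge A]
      · simp only [if_neg h1, if_pos h2]
        by_cases ht : ∑ a ∈ A, p a = L A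
        · exact absurd ((hsep A ht).2 h2) h1
        · have := hslack A ht; linarith
      · simp only [if_neg h1, if_neg h2]; linarith [hge A]
  have h1mem := move x y hxy hεy (fun A hA => hcon A hA)
  have h2mem := move y x hxy.symm hεx (fun A hA => (hcon A hA).symm)
  have hseg : p ∈ openSegment ℝ
      (fun a => p a + (if a = x then ε else if a = y then -ε else 0))
      (fun a => p a + (if a = y then ε else if a = x then -ε else 0)) := by
    refine ⟨1/2, 1/2, by norm_num, by norm_num, by norm_num, ?_⟩
    funext a
    simp only [Pi.add_apply, Pi.smul_apply, smul_eq_mul]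
    by_cases h1 : a = x
    · subst h1; simp [hxy]; ring
    · by_cases h2 : a = y
      · subst h2; simp [h1, Ne.symm hxy]; ring
      · simp [h1, h2]; ring
  have hq1 := hp.2 h1mem h2mem hseg
  have hxx : p x + ε = p x := by
    have h := congrFun hq1 x
    simpa using h
  linarith

private lemma stmt12_step {Ω : Type*} [Fintype Ω] [DecidableEq Ω] (L : Finset Ω → ℝ)
    (h0 : L ∅ = 0) (h1 : L Finset.univ = 1)
    (h2mon : ∀ A B : Finset Ω, L A + L B ≤ L (A ∪ B) + L (A ∩ B))
    {M : Set (Ω → ℝ)} {p : Ω → ℝ}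
    (hM : M = {p | (∀ x, 0 ≤ p x) ∧ (∑ x, p x) = 1 ∧
      ∀ A : Finset Ω, L A ≤ ∑ x ∈ A, p x})
    (hp : p ∈ M.extremePoints ℝ) {S : Finset Ω}
    (hS : stmt12Good L p S) (hSne : S ≠ Finset.univ) :
    ∃ z ∉ S, stmt12Good L p (insert z S) := by
  classical
  have hpM := hp.1
  rw [hM] at hpM
  obtain ⟨hpos, hsum, hge⟩ := hpM
  obtain ⟨C, hCt, hCS, hCsum⟩ := hS
  set Fam : Finset (Finset Ω) := S.powerset.filter (fun A => ∑ a ∈ A, p a = L A) with hFam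
  set Cs : Finset Ω := Fam.sup id with hCsdef
  have hCsT : ∑ a ∈ Cs, p a = L Cs := by
    apply Finset.sup_induction (p := fun X : Finset Ω => ∑ a ∈ X, p a = L X)
    · show ∑ a ∈ (⊥ : Finset Ω), p a = L ⊥
      rw [Finset.bot_eq_empty, Finset.sum_empty, h0]
    · intro A hA B hB
      exact (stmt12_lattice L h2mon hge hA hB).1
    · intro A hA
      exact (Finset.mem_filter.1 hA).2
  have hCsS : Cs ⊆ S := by
    show Cs ≤ S
    apply Finset.sup_le
    intro A hA
    exact Finset.mem_powerset.1 (Finset.mem_filter.1 hA).1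
  have hCCs : C ⊆ Cs :=
    Finset.le_sup (f := id) (Finset.mem_filter.2 ⟨Finset.mem_powerset.2 hCS, hCt⟩)
  have hCsSum : ∑ a ∈ S, p a = ∑ a ∈ Cs, p a := by
    apply le_antisymm
    · rw [hCsum]
      exact Finset.sum_le_sum_of_subset_of_nonneg hCCs (fun i _ _ => hpos i)
    · exact Finset.sum_le_sum_of_subset_of_nonneg hCsS (fun i _ _ => hpos i)
  have hzero : ∀ a ∈ S, a ∉ Cs → p a = 0 := by
    intro a haS haC
    have hsd : ∑ b ∈ S \ Cs, p b = 0 := by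
      have h' := Finset.sum_sdiff (f := p) hCsS
      linarith
    exact (Finset.sum_eq_zero_iff_of_nonneg (fun i _ => hpos i)).1 hsd a
      (Finset.mem_sdiff.2 ⟨haS, haC⟩)
  set Sup : Finset (Finset Ω) :=
    Finset.univ.filter (fun A => (∑ a ∈ A, p a = L A) ∧ Cs ⊂ A) with hSupdef
  have hSupne : Sup.Nonempty := by
    refine ⟨Finset.univ, ?_⟩
    simp only [hSupdef, Finset.mem_filter, Finset.mem_univ, true_and]
    refine ⟨by rw [h1]; exact hsum, Finset.ssubset_univ_iff.2 ?_⟩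
    intro h
    exact hSne (Finset.univ_subset_iff.1 (h ▸ hCsS))
  obtain ⟨C', hC'mem, hC'min⟩ := Finset.exists_min_image Sup Finset.card hSupne
  simp only [hSupdef, Finset.mem_filter, Finset.mem_univ, true_and] at hC'mem
  obtain ⟨hC't, hCsC'⟩ := hC'mem
  have hgap : ∀ A : Finset Ω, (∑ a ∈ A, p a = L A) →
      ∀ u ∈ C' \ Cs, ∀ v ∈ C' \ Cs, (u ∈ A ↔ v ∈ A) := by
    intro A hA u hu v hv
    set D := (A ∩ C') ∪ Cs with hD
    have hDt : ∑ a ∈ D, p a = L D := by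
      have hAC := (stmt12_lattice L h2mon hge hA hC't).2
      exact (stmt12_lattice L h2mon hge hAC hCsT).1
    have hDsub : D ⊆ C' := Finset.union_subset Finset.inter_subset_right hCsC'.subset
    have hDcase : D = Cs ∨ D = C' := by
      by_cases hDeq : D = Cs
      · exact Or.inl hDeq
      · right
        have hCsD : Cs ⊂ D := (Finset.subset_union_right).ssubset_of_ne (Ne.symm hDeq)
        have hcard : C'.card ≤ D.card := by
          apply hC'min
          simp only [hSupdef, Finset.mem_filter, Finset.mem_univ, true_and]
          exact ⟨hDt, hCsD⟩
        exact Finset.eq_of_subset_of_card_le hDsub hcard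
    obtain ⟨huC, huCs⟩ := Finset.mem_sdiff.1 hu
    obtain ⟨hvC, hvCs⟩ := Finset.mem_sdiff.1 hv
    rcases hDcase with h | h
    · constructor <;> intro hmem
      · exfalso; apply huCs
        have : u ∈ D := Finset.mem_union_left _ (Finset.mem_inter.2 ⟨hmem, huC⟩)
        rwa [h] at this
      · exfalso; apply hvCs
        have : v ∈ D := Finset.mem_union_left _ (Finset.mem_inter.2 ⟨hmem, hvC⟩)
        rwa [h] at this
    · have hu' : u ∈ A := by
        have : u ∈ D := h ▸ huC
        rcases Finset.mem_union.1 this with h' | h'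
        · exact (Finset.mem_inter.1 h').1
        · exact absurd h' huCs
      have hv' : v ∈ A := by
        have : v ∈ D := h ▸ hvC
        rcases Finset.mem_union.1 this with h' | h'
        · exact (Finset.mem_inter.1 h').1
        · exact absurd h' hvCs
      simp [hu', hv']
  by_cases hDS : C' \ Cs ⊆ S
  · exfalso
    have hC'S : C' ⊆ S := by
      intro a ha
      by_cases h : a ∈ Cs
      · exact hCsS h
      · exact hDS (Finset.mem_sdiff.2 ⟨ha, h⟩)
    have : C' ⊆ Cs :=
      Finset.le_sup (f := id) (Finset.mem_filter.2 ⟨Finset.mem_powerset.2 hC'S, hC't⟩)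
    exact hCsC'.not_subset this
  · obtain ⟨z, hzD, hzS⟩ : ∃ z ∈ C' \ Cs, z ∉ S := by
      by_contra h
      push_neg at h
      exact hDS h
    by_cases hz0 : ∃ w ∈ C' \ Cs, w ∉ S ∧ p w = 0
    · obtain ⟨w, hwD, hwS, hw0⟩ := hz0
      refine ⟨w, hwS, Cs, hCsT, hCsS.trans (Finset.subset_insert _ _), ?_⟩
      rw [Finset.sum_insert hwS, hw0, hCsSum]
      ring
    · push_neg at hz0
      have hppos : ∀ w ∈ C' \ Cs, w ∉ S → 0 < p w := by
        intro w hwD hwS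
        exact lt_of_le_of_ne (hpos w) (Ne.symm (hz0 w hwD hwS))
      have huniq : ∀ w ∈ C' \ Cs, w ∉ S → w = z := by
        intro w hwD hwS
        by_contra hne
        obtain ⟨A, hAt, hAsep⟩ := stmt12_exchange L hM hp hne (hppos w hwD hwS)
          (hppos z hzD hzS)
        exact hAsep (hgap A hAt w hwD z hzD)
      have hC'sub : C' ⊆ insert z S := by
        intro a ha
        by_cases hac : a ∈ Cs
        · exact Finset.mem_insert_of_mem (hCsS hac)
        · by_cases has : a ∈ S
          · exact Finset.mem_insert_of_mem has
          · rw [huniq a (Finset.mem_sdiff.2 ⟨ha, hac⟩) has]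
            exact Finset.mem_insert_self _ _
      refine ⟨z, hzS, C', hC't, hC'sub, ?_⟩
      have h' := Finset.sum_sdiff (f := p) hC'sub
      have hz' : ∑ a ∈ insert z S \ C', p a = 0 := by
        apply Finset.sum_eq_zero
        intro a ha
        obtain ⟨ha1, ha2⟩ := Finset.mem_sdiff.1 ha
        have haz : a ≠ z := fun h => ha2 (h ▸ (Finset.mem_sdiff.1 hzD).1)
        have haS : a ∈ S := (Finset.mem_insert.1 ha1).resolve_left haz
        exact hzero a haS (fun h => ha2 (hCsC'.subset h))
      linarith

/-- The credal set of a 2-monotone lower probability on a finite `n`-element set has at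
most `n!` extreme points. -/
theorem stmt12 {Ω : Type*} [Fintype Ω] [DecidableEq Ω]
    (L : Finset Ω → ℝ) (h0 : L ∅ = 0) (h1 : L Finset.univ = 1)
    (h2mon : ∀ A B : Finset Ω, L A + L B ≤ L (A ∪ B) + L (A ∩ B))
    (M : Set (Ω → ℝ))
    (hM : M = {p | (∀ x, 0 ≤ p x) ∧ (∑ x, p x) = 1 ∧
      ∀ A : Finset Ω, L A ≤ ∑ x ∈ A, p x}) :
    (M.extremePoints ℝ).Finite ∧
    (M.extremePoints ℝ).ncard ≤ Nat.factorial (Fintype.card Ω) := by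
  classical
  set q : List Ω → Ω → ℝ := fun l x =>
    stmt12gmax L ((l.take (l.idxOf x + 1)).toFinset)
      - stmt12gmax L ((l.take (l.idxOf x)).toFinset) with hq
  set P : Finset (List Ω) := (Finset.univ (α := Ω)).toList.permutations.toFinset with hP
  have hsub : M.extremePoints ℝ ⊆ ↑(P.image q) := by
    intro p hp
    have hpM := hp.1
    rw [hM] at hpM
    obtain ⟨hpos, hsum, hge⟩ := hpM
    -- build the chain list
    have main : ∀ k : ℕ, k ≤ Fintype.card Ω → ∃ l : List Ω, l.Nodup ∧ l.length = k ∧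
        ∀ j : ℕ, stmt12Good L p ((l.take j).toFinset) := by
      intro k
      induction k with
      | zero =>
        intro _
        exact ⟨[], List.nodup_nil, rfl, fun j =>
          ⟨∅, by rw [Finset.sum_empty, h0], by simp, by simp⟩⟩
      | succ k ih =>
        intro hk
        obtain ⟨l, hnd, hlen, hgood⟩ := ih (Nat.le_of_succ_le hk)
        have hSne : l.toFinset ≠ Finset.univ := by
          intro h
          have hcard : l.toFinset.card = Fintype.card Ω := by rw [h]; exact Finset.card_univ
          rw [List.toFinset_card_of_nodup hnd, hlen] at hcard
          omega
        have hGoodS : stmt12Good L p l.toFinset := by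
          have := hgood l.length
          rwa [List.take_length] at this
        obtain ⟨z, hzS, hGood'⟩ := stmt12_step L h0 h1 h2mon hM hp hGoodS hSne
        have hzl : z ∉ l := fun h => hzS (List.mem_toFinset.2 h)
        refine ⟨l ++ [z], ?_, by simp [hlen], ?_⟩
        · rw [List.nodup_append]
          exact ⟨hnd, List.nodup_singleton z, by
            intro a ha b hb hab
            simp only [List.mem_singleton] at hb
            subst hb; subst hab; exact hzl ha⟩
        · intro j
          rcases le_or_gt j l.length with hj | hj
          · rw [List.take_append_of_le_length hj]
            exact hgood j
          · have htake : (l ++ [z]).take j = l ++ [z] := by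
              apply List.take_of_length_le
              simp only [List.length_append, List.length_singleton, hlen]
              omega
            rw [htake]
            have hins : (l ++ [z]).toFinset = insert z l.toFinset := by
              ext; simp [or_comm]
            rw [hins]
            exact hGood'
    obtain ⟨l, hnd, hlen, hgood⟩ := main (Fintype.card Ω) le_rfl
    have huniv : l.toFinset = Finset.univ := by
      apply Finset.eq_univ_of_card
      rw [List.toFinset_card_of_nodup hnd, hlen]
    have hlP : l ∈ P := by
      rw [hP, List.mem_toFinset, List.mem_permutations]
      exact List.perm_of_nodup_nodup_toFinset_eq hnd (Finset.nodup_toList _)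
        (by rw [huniv, Finset.toList_toFinset])
    refine Finset.mem_coe.2 (Finset.mem_image.2 ⟨l, hlP, ?_⟩)
    funext x
    have hx : x ∈ l := by rw [← List.mem_toFinset, huniv]; exact Finset.mem_univ x
    set j := l.idxOf x with hj
    have hjlt : j < l.length := List.idxOf_lt_length_iff.2 hx
    have htake : l.take (j + 1) = l.take j ++ [x] := by
      rw [List.take_succ]
      congr
      rw [List.getElem?_eq_getElem hjlt, List.getElem_idxOf hjlt]
      rfl
    have hxnot : x ∉ (l.take j).toFinset := by
      have hnd' : (l.take (j + 1)).Nodup := ((l.take_sublist (j + 1))).nodup hnd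
      rw [htake] at hnd'
      rw [List.mem_toFinset]
      intro hmem
      exact (List.disjoint_of_nodup_append hnd') hmem (List.mem_singleton_self x)
    have hins : (l.take (j + 1)).toFinset = insert x (l.take j).toFinset := by
      rw [htake]
      ext; simp [or_comm]
    have e1 := stmt12_goodEval L hpos hge (hgood (j + 1))
    have e2 := stmt12_goodEval L hpos hge (hgood j)
    simp only [hq]
    rw [← hj, ← e1, ← e2, hins, Finset.sum_insert hxnot]
    ring
  constructor
  · exact Set.Finite.subset (P.image q).finite_toSet hsub
  · calc (M.extremePoints ℝ).ncard ≤ (↑(P.image q) : Set (Ω → ℝ)).ncard :=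
        Set.ncard_le_ncard hsub (P.image q).finite_toSet
    _ = (P.image q).card := Set.ncard_coe_finset _
    _ ≤ P.card := Finset.card_image_le
    _ ≤ (Finset.univ (α := Ω)).toList.permutations.length := List.toFinset_card_le _
    _ = Nat.factorial (Fintype.card Ω) := by
        rw [List.length_permutations, Finset.length_toList, Finset.card_univ]
end

section
/- Let E be a coherent lower prevision defined on all functions on a finite set Ω that is comonotonic additive (E(f+g) = E(f)+E(g) whenever f, g are comonotone). Then the set function L(A) := E(1_A) is 2-monotone: L(A∪B) + L(A∩B) ≥ L(A) + L(B) for all A, B ⊆ Ω. -/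
/-- If a coherent lower prevision `E` on all gambles on a finite set is comonotonic
additive, then `L(A) = E(1_A)` is a 2-monotone set function. -/
theorem stmt14 {Ω : Type*} [Fintype Ω] [Nonempty Ω]
    (E : (Ω → ℝ) → ℝ)
    (hinf : ∀ f : Ω → ℝ, (⨅ x, f x) ≤ E f)
    (hhom : ∀ (f : Ω → ℝ) (c : ℝ), 0 ≤ c → E (c • f) = c * E f)
    (hsuper : ∀ f g : Ω → ℝ, E f + E g ≤ E (f + g))
    (hcom : ∀ f g : Ω → ℝ, (∀ x y, f x > f y → g x ≥ g y) →
      E (f + g) = E f + E g)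
    (A B : Set Ω) :
    E (Set.indicator A fun _ => (1 : ℝ)) + E (Set.indicator B fun _ => (1 : ℝ)) ≤
      E (Set.indicator (A ∪ B) fun _ => (1 : ℝ)) +
        E (Set.indicator (A ∩ B) fun _ => (1 : ℝ)) := by
  have hco : ∀ x y : Ω,
      (Set.indicator (A ∪ B) (fun _ => (1 : ℝ))) x >
        (Set.indicator (A ∪ B) (fun _ => (1 : ℝ))) y →
      (Set.indicator (A ∩ B) (fun _ => (1 : ℝ))) x ≥
        (Set.indicator (A ∩ B) (fun _ => (1 : ℝ))) y := by
    intro x y h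
    by_cases hy : y ∈ A ∪ B
    · simp [Set.indicator_of_mem hy] at h
      by_cases hx : x ∈ A ∪ B <;> simp [hx] at h <;> linarith
    · have hy' : y ∉ A ∩ B := fun h' => hy (Or.inl h'.1)
      simp [Set.indicator_of_notMem hy']
      exact Set.indicator_nonneg (fun _ _ => zero_le_one) x
  have hsum : Set.indicator (A ∪ B) (fun _ => (1 : ℝ)) +
      Set.indicator (A ∩ B) (fun _ => (1 : ℝ)) =
      Set.indicator A (fun _ => (1 : ℝ)) + Set.indicator B (fun _ => (1 : ℝ)) := by
    funext x
    by_cases hA : x ∈ A <;> by_cases hB : x ∈ B <;>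
      simp [Set.indicator_apply, hA, hB]
  calc E (Set.indicator A fun _ => (1 : ℝ)) + E (Set.indicator B fun _ => (1 : ℝ))
      ≤ E (Set.indicator A (fun _ => (1 : ℝ)) + Set.indicator B (fun _ => (1 : ℝ))) :=
        hsuper _ _
    _ = E (Set.indicator (A ∪ B) (fun _ => (1 : ℝ)) +
          Set.indicator (A ∩ B) (fun _ => (1 : ℝ))) := by rw [hsum]
    _ = _ := hcom _ _ hco
end

section
/- Let E be a comonotonic additive coherent lower prevision on ℝ^Ω for finite Ω, and let L(A) = E(1_A). Then for every f : Ω → ℝ with f ≥ 0, writing f = ∑_{A∈A} α_A 1_A as the nonnegative combination of indicators of its (chain of) level sets, one has E(f) = ∑_{A∈A} α_A L(A). -/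
/-- For a comonotonic additive coherent lower prevision `E` and a nonnegative gamble `f`
written as a nonnegative combination of indicators of the chain of its strict upper level
sets, `E f = ∑ α_A · L(A)` where `L(A) = E(1_A)`. -/
theorem stmt15 {Ω : Type*} [Fintype Ω] [Nonempty Ω] [DecidableEq (Set Ω)]
    (E : (Ω → ℝ) → ℝ)
    (hinf : ∀ f : Ω → ℝ, (⨅ x, f x) ≤ E f)
    (hhom : ∀ (f : Ω → ℝ) (c : ℝ), 0 ≤ c → E (c • f) = c * E f)
    (hsuper : ∀ f g : Ω → ℝ, E f + E g ≤ E (f + g))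
    (hcom : ∀ f g : Ω → ℝ, (∀ x y, f x > f y → g x ≥ g y) →
      E (f + g) = E f + E g)
    (f : Ω → ℝ) (hf : ∀ x, 0 ≤ f x)
    (𝒜 : Finset (Set Ω)) (α : Set Ω → ℝ)
    (hchain : ∀ A ∈ 𝒜, ∀ B ∈ 𝒜, A ⊆ B ∨ B ⊆ A)
    (hlevel : ∀ A ∈ 𝒜, ∃ c : ℝ, A = {x | c < f x})
    (hα : ∀ A ∈ 𝒜, 0 ≤ α A)
    (hdecomp : f = ∑ A ∈ 𝒜, α A • Set.indicator A (fun _ => (1 : ℝ))) :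
    E f = ∑ A ∈ 𝒜, α A * E (Set.indicator A (fun _ => (1 : ℝ))) := by
  subst hdecomp
  clear hinf hsuper hf hlevel
  have hE0 : E 0 = 0 := by
    have := hhom 0 0 le_rfl
    simpa using this
  induction 𝒜 using Finset.induction with
  | empty => simpa using hE0
  | @insert A s hA ih =>
    rw [Finset.sum_insert hA, Finset.sum_insert hA]
    have hcomon : ∀ x y, (α A • Set.indicator A (fun _ => (1 : ℝ))) x >
        (α A • Set.indicator A (fun _ => (1 : ℝ))) y →
        (∑ B ∈ s, α B • Set.indicator B (fun _ => (1 : ℝ))) x ≥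
        (∑ B ∈ s, α B • Set.indicator B (fun _ => (1 : ℝ))) y := by
      intro x y hxy
      simp only [Pi.smul_apply, smul_eq_mul] at hxy
      have hxA : x ∈ A := by
        by_contra hx
        rw [Set.indicator_of_notMem hx] at hxy
        have : (0:ℝ) ≤ α A * Set.indicator A (fun _ => (1:ℝ)) y :=
          mul_nonneg (hα A (Finset.mem_insert_self A s))
            (Set.indicator_nonneg (fun _ _ => zero_le_one) y)
        linarith [hxy]
      have hyA : y ∉ A := by
        intro hy
        rw [Set.indicator_of_mem hy] at hxy
        have : Set.indicator A (fun _ => (1:ℝ)) x ≤ 1 := by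
          classical
          rw [Set.indicator_apply]
          split <;> norm_num
        nlinarith [hα A (Finset.mem_insert_self A s)]
      simp only [Finset.sum_apply, Pi.smul_apply, smul_eq_mul]
      apply Finset.sum_le_sum
      intro B hB
      have hαB := hα B (Finset.mem_insert_of_mem hB)
      rcases hchain A (Finset.mem_insert_self A s) B
          (Finset.mem_insert_of_mem hB) with hAB | hBA
      · have hxB : x ∈ B := hAB hxA
        rw [Set.indicator_of_mem hxB]
        have : Set.indicator B (fun _ => (1:ℝ)) y ≤ 1 := by
          classical
          rw [Set.indicator_apply]
          split <;> norm_num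
        nlinarith
      · have hyB : y ∉ B := fun hy => hyA (hBA hy)
        rw [Set.indicator_of_notMem hyB, mul_zero]
        exact mul_nonneg hαB (Set.indicator_nonneg (fun _ _ => zero_le_one) x)
    rw [hcom _ _ hcomon, hhom _ _ (hα A (Finset.mem_insert_self A s)),
      ih (fun B hB C hC => hchain B (Finset.mem_insert_of_mem hB) C
        (Finset.mem_insert_of_mem hC))
        (fun B hB => hα B (Finset.mem_insert_of_mem hB))]
end

section
/- Let Ω = {x_1, …, x_n} be a finite set with x_n = x, and let 1 ≤ k < n−1, so that B = {x_1, …, x_k} and A = {x_{k+1}, …, x_{n−1}} are disjoint nonempty sets with A ∪ B = Ω \ {x}. Then a function h : Ω → ℝ lies in the cone generated by {1_{x_1}, …, 1_{x_k}} ∪ {1_{{x_j}^c} : k < j ≤ n−1} ∪ {±1_Ω} if and only if h(x_i) ≥ h(x_n) for 1 ≤ i ≤ k and h(x_j) ≤ h(x_n) for k < j ≤ n−1. -/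
lemma sum_ind_single {n : ℕ} (s : Finset (Fin n)) (α : Fin n → ℝ) (p : Fin n) :
    (∑ i ∈ s, α i • (Set.indicator ({i} : Set (Fin n)) fun _ => (1:ℝ))) p
      = if p ∈ s then α p else 0 := by
  rw [Finset.sum_apply]
  rw [Finset.sum_congr rfl (fun i _ => ?_)]
  · exact Finset.sum_ite_eq' s p α
  · simp [Set.indicator_apply, eq_comm, mul_ite, Pi.single_apply]

lemma sum_ind_compl {n : ℕ} (s : Finset (Fin n)) (α : Fin n → ℝ) (p : Fin n) :
    (∑ j ∈ s, α j • (Set.indicator ({j}ᶜ : Set (Fin n)) fun _ => (1:ℝ))) p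
      = (∑ j ∈ s, α j) - (if p ∈ s then α p else 0) := by
  rw [Finset.sum_apply]
  have key : ∀ j : Fin n, (α j • (Set.indicator ({j}ᶜ : Set (Fin n)) fun _ => (1:ℝ))) p
      = α j - (if j = p then α j else 0) := by
    intro j
    simp only [Pi.smul_apply, Set.indicator_apply, Set.mem_compl_iff,
      Set.mem_singleton_iff, smul_eq_mul, mul_ite, mul_one, mul_zero]
    by_cases hpj : p = j <;> simp [hpj, eq_comm]
  calc ∑ j ∈ s, (α j • (Set.indicator ({j}ᶜ : Set (Fin n)) fun _ => (1:ℝ))) p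
      = ∑ j ∈ s, (α j - (if j = p then α j else 0)) :=
        Finset.sum_congr rfl fun j _ => key j
    _ = (∑ j ∈ s, α j) - (if p ∈ s then α p else 0) := by
        rw [Finset.sum_sub_distrib, Finset.sum_ite_eq' s p α]

/-- Characterization of the maximal elementary simplicial cones of PRI models:
`h` lies in the cone generated by the singletons `{x₁},…,{x_k}`, the complements
`{x_{k+1}}ᶜ,…,{x_{n-1}}ᶜ` and `±1_Ω` iff `h(xᵢ) ≥ h(x_n)` for `i ≤ k` and
`h(x_j) ≤ h(x_n)` for `k < j ≤ n-1`. (Indices `0`-based: `x_n` is index `n-1`.) -/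
theorem stmt16 (n : ℕ) (hn : 3 ≤ n) (k : ℕ) (hk1 : 1 ≤ k) (hk2 : k ≤ n - 2)
    (h : Fin n → ℝ) :
    (∃ (α : Fin n → ℝ) (γ : ℝ), (∀ i, 0 ≤ α i) ∧
      h = (∑ i ∈ Finset.univ.filter (fun i : Fin n => (i : ℕ) < k),
            α i • (Set.indicator {i} fun _ => (1 : ℝ)))
        + (∑ j ∈ Finset.univ.filter
              (fun j : Fin n => k ≤ (j : ℕ) ∧ (j : ℕ) < n - 1),
            α j • (Set.indicator ({j}ᶜ : Set (Fin n)) fun _ => (1 : ℝ)))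
        + γ • (Set.indicator (Set.univ : Set (Fin n)) fun _ => (1 : ℝ))) ↔
    ((∀ i : Fin n, (i : ℕ) < k → h ⟨n - 1, by omega⟩ ≤ h i) ∧
     (∀ j : Fin n, k ≤ (j : ℕ) → (j : ℕ) < n - 1 → h j ≤ h ⟨n - 1, by omega⟩)) := by
  set L : Fin n := ⟨n - 1, by omega⟩ with hL
  set F1 : Finset (Fin n) := Finset.univ.filter (fun i : Fin n => (i : ℕ) < k) with hF1
  set F2 : Finset (Fin n) := Finset.univ.filter
      (fun j : Fin n => k ≤ (j : ℕ) ∧ (j : ℕ) < n - 1) with hF2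
  have memF1 : ∀ p : Fin n, p ∈ F1 ↔ (p : ℕ) < k := by
    intro p; simp [hF1]
  have memF2 : ∀ p : Fin n, p ∈ F2 ↔ k ≤ (p : ℕ) ∧ (p : ℕ) < n - 1 := by
    intro p; simp [hF2]
  have happ : ∀ (α : Fin n → ℝ) (γ : ℝ) (p : Fin n),
      ((∑ i ∈ F1, α i • (Set.indicator ({i} : Set (Fin n)) fun _ => (1 : ℝ)))
        + (∑ j ∈ F2, α j • (Set.indicator ({j}ᶜ : Set (Fin n)) fun _ => (1 : ℝ)))
        + γ • (Set.indicator (Set.univ : Set (Fin n)) fun _ => (1 : ℝ))) p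
      = (if p ∈ F1 then α p else 0)
        + ((∑ j ∈ F2, α j) - (if p ∈ F2 then α p else 0)) + γ := by
    intro α γ p
    simp only [Pi.add_apply, sum_ind_single, sum_ind_compl, Pi.smul_apply,
      Set.indicator_univ, smul_eq_mul, mul_one]
  constructor
  · rintro ⟨α, γ, hpos, heq⟩
    have hv : ∀ p : Fin n, h p = (if p ∈ F1 then α p else 0)
        + ((∑ j ∈ F2, α j) - (if p ∈ F2 then α p else 0)) + γ := by
      intro p; rw [heq]; exact happ α γ p
    have hLv : h L = (∑ j ∈ F2, α j) + γ := by
      rw [hv L]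
      have hLval : (L : ℕ) = n - 1 := rfl
      have h1 : L ∉ F1 := by rw [memF1]; omega
      have h2 : L ∉ F2 := by rw [memF2]; omega
      simp [h1, h2]
    constructor
    · intro i hi
      have h1 : i ∈ F1 := (memF1 i).2 hi
      have h2 : i ∉ F2 := by rw [memF2]; omega
      rw [hv i, hLv]; simp [h1, h2]
      linarith [hpos i]
    · intro j hj1 hj2
      have h1 : j ∉ F1 := by rw [memF1]; omega
      have h2 : j ∈ F2 := (memF2 j).2 ⟨hj1, hj2⟩
      rw [hv j, hLv]; simp [h1, h2]
      linarith [hpos j]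
  · rintro ⟨hA, hB⟩
    refine ⟨fun p => if (p : ℕ) < k then h p - h L
        else if (p : ℕ) < n - 1 then h L - h p else 0,
      h L - ∑ j ∈ F2, (if (j : ℕ) < k then h j - h L
        else if (j : ℕ) < n - 1 then h L - h j else 0), fun p => ?_, ?_⟩
    · by_cases h1 : (p : ℕ) < k
      · simp only [h1, if_true]; linarith [hA p h1]
      · by_cases h2 : (p : ℕ) < n - 1
        · simp only [h1, h2, if_false, if_true]
          linarith [hB p (by omega) h2]
        · simp [h1, h2]
    · funext p
      rw [happ]
      set α : Fin n → ℝ := fun p => if (p : ℕ) < k then h p - h L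
        else if (p : ℕ) < n - 1 then h L - h p else 0 with hα
      by_cases h1 : (p : ℕ) < k
      · have m1 : p ∈ F1 := (memF1 p).2 h1
        have m2 : p ∉ F2 := by rw [memF2]; omega
        simp only [m1, if_true, m2, if_false, hα, h1]
        ring
      · by_cases h2 : (p : ℕ) < n - 1
        · have m1 : p ∉ F1 := by rw [memF1]; omega
          have m2 : p ∈ F2 := (memF2 p).2 ⟨by omega, h2⟩
          simp only [m1, if_false, m2, if_true, hα, h1, h2]
          ring
        · have hp : p = L := by
            apply Fin.ext
            have := p.isLt
            simp [hL]; omega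
          have m1 : p ∉ F1 := by rw [memF1]; omega
          have m2 : p ∉ F2 := by rw [memF2]; omega
          rw [hp] at m1 m2 ⊢
          simp [m1, m2]
end
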